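/- arXiv:2407.20620 — 3 statements merged into one kernel-verified Lean document; each statement's English description precedes it below -/
import Mathlib

section
/- Let f(x) = (1/2)⟨x, Qx⟩ + ⟨q, x⟩ with Q symmetric positive semidefinite with smallest eigenvalue m ≥ 0 and largest eigenvalue L > 0, let g : ℝⁿ → ℝ be convex and lower semicontinuous, and let μ ∈ (0, 1/L). Set m̃ = min{(1 − μm)m, (1 − μL)L}. Then the forward–backward envelope F_μ is m̃-strongly convex, i.e., F_μ − (m̃/2)‖·‖² is convex. -/
/-!
For quadratic `f` the forward step `x ↦ x - μ ∇f x` is affine, so `F_μ - (m̃/2)‖·‖²` splits into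
the Moreau envelope of `g` composed with an affine map and the quadratic
`f - (μ/2)‖∇f‖² - (m̃/2)‖·‖²`. The envelope is convex, being a partial minimum of the jointly convex
`(z, v) ↦ g z + ‖z - v‖² / (2μ)`. The quadratic has Hessian `Q - μQ² - m̃`, which is positive
semidefinite because `λ ↦ λ - μλ²` is concave, hence minimal at an endpoint of `[m, L]`; without
spectral theory this is the inequality `‖Qx‖² ≤ (m + L)⟪x, Qx⟫ - mL‖x‖²`, i.e. `(Q - m)(L - Q) ⪰ 0`,
which follows from Cauchy–Schwarz for the positive form `⟪x, (Q - m) y⟫`.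
-/

open Set RealInnerProductSpace

noncomputable section

section Module

variable {E : Type*} [AddCommGroup E] [Module ℝ E]

theorem LinearMap.BilinForm.convexOn_apply_self (B : LinearMap.BilinForm ℝ E)
    (hB : ∀ x, 0 ≤ B x x) : ConvexOn ℝ univ fun x => B x x := by
  refine ⟨convex_univ, fun x _ y _ a b ha hb hab => ?_⟩
  obtain rfl : b = 1 - a := by linarith
  have hxy := hB (x - y)
  simp only [map_add, map_sub, map_smul, LinearMap.add_apply, LinearMap.sub_apply,
    LinearMap.smul_apply, smul_eq_mul] at hxy ⊢
  linear_combination a * (1 - a) * hxy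

theorem ConvexOn.ciInf_fst {F : Type*} [AddCommGroup F] [Module ℝ F] {φ : E × F → ℝ}
    (hφ : ConvexOn ℝ univ φ) (hbdd : ∀ v, BddBelow (range fun z => φ (z, v))) :
    ConvexOn ℝ univ fun v => ⨅ z, φ (z, v) := by
  refine ⟨convex_univ, fun v _ w _ a b ha hb hab => le_of_forall_pos_le_add fun ε hε => ?_⟩
  obtain ⟨z₁, hz₁⟩ := exists_lt_of_ciInf_lt (lt_add_of_pos_right (⨅ z, φ (z, v)) hε)
  obtain ⟨z₂, hz₂⟩ := exists_lt_of_ciInf_lt (lt_add_of_pos_right (⨅ z, φ (z, w)) hε)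
  calc ⨅ z, φ (z, a • v + b • w) ≤ φ (a • z₁ + b • z₂, a • v + b • w) := ciInf_le (hbdd _) _
    _ = φ (a • (z₁, v) + b • (z₂, w)) := by simp
    _ ≤ a • φ (z₁, v) + b • φ (z₂, w) := hφ.2 trivial trivial ha hb hab
    _ ≤ a • ((⨅ z, φ (z, v)) + ε) + b • ((⨅ z, φ (z, w)) + ε) := by gcongr
    _ = a • (⨅ z, φ (z, v)) + b • (⨅ z, φ (z, w)) + ε := by
      simp only [smul_eq_mul]; linear_combination ε * hab

end Module

section Moreau

variable {E : Type*} [NormedAddCommGroup E]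

def moreauEnvelope (μ : ℝ) (g : E → ℝ) (v : E) : ℝ :=
  ⨅ z, g z + ‖z - v‖ ^ 2 / (2 * μ)

theorem bddBelow_range_add_norm_sub_sq_div {μ K : ℝ} (hμ : 0 < μ) (hK : 0 ≤ K) {g : E → ℝ}
    (hg : ∀ z, -K * (1 + ‖z‖) ≤ g z) (v : E) :
    BddBelow (range fun z => g z + ‖z - v‖ ^ 2 / (2 * μ)) := by
  refine ⟨-K * (1 + ‖v‖) - μ * K ^ 2 / 2, ?_⟩
  rintro _ ⟨z, rfl⟩
  have htri : ‖z‖ ≤ ‖v‖ + ‖z - v‖ := norm_le_norm_add_norm_sub' z v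
  -- AM-GM: `K r ≤ r² / (2μ) + μ K² / 2`
  have hamgm : K * ‖z - v‖ ≤ ‖z - v‖ ^ 2 / (2 * μ) + μ * K ^ 2 / 2 := by
    rw [div_add' _ _ _ (by positivity), le_div_iff₀ (by positivity)]
    nlinarith [sq_nonneg (‖z - v‖ - μ * K)]
  nlinarith [hg z, mul_le_mul_of_nonneg_left htri hK]

variable [NormedSpace ℝ E]

theorem ConvexOn.exists_neg_mul_one_add_norm_le [FiniteDimensional ℝ E] {g : E → ℝ}
    (hg : ConvexOn ℝ univ g) : ∃ K, 0 ≤ K ∧ ∀ z, -K * (1 + ‖z‖) ≤ g z := by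
  obtain ⟨C, hC⟩ := (isCompact_closedBall (0 : E) 1).exists_bound_of_continuousOn
    ((hg.continuousOn isOpen_univ).mono (subset_univ _))
  have hg0 := hC 0 (by simp)
  have hC0 : 0 ≤ C := (norm_nonneg _).trans hg0
  refine ⟨2 * C, by positivity, fun z => ?_⟩
  -- `0` lies on the segment from `z` to the point `w` of the unit ball opposite to `z`,
  -- so convexity bounds `g z` below by the values of `g` on the unit ball
  set w : E := -‖z‖⁻¹ • z
  have hw : w ∈ Metric.closedBall (0 : E) 1 := by
    simpa [w, norm_smul] using inv_mul_le_one_of_le₀ le_rfl (norm_nonneg z)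
  have hcomb : (‖z‖ / (1 + ‖z‖)) • w + (1 / (1 + ‖z‖)) • z = 0 := by
    rcases eq_or_ne z 0 with rfl | hz
    · simp
    · have : ‖z‖ ≠ 0 := norm_ne_zero_iff.mpr hz
      simp only [w, smul_smul, ← add_smul]
      field_simp
      simp
  have hconv := hg.2 (mem_univ w) (mem_univ z) (by positivity : 0 ≤ ‖z‖ / (1 + ‖z‖))
    (by positivity : 0 ≤ 1 / (1 + ‖z‖)) (by field_simp; ring)
  rw [hcomb, smul_eq_mul, smul_eq_mul] at hconv
  have hgw := le_of_abs_le (hC w hw)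
  have hsegment : (1 + ‖z‖) * g 0 ≤ ‖z‖ * g w + g z := by
    have := mul_le_mul_of_nonneg_left hconv (by positivity : (0 : ℝ) ≤ 1 + ‖z‖)
    field_simp at this
    linarith
  nlinarith [neg_le_of_abs_le hg0, norm_nonneg z]

theorem ConvexOn.moreauEnvelope [FiniteDimensional ℝ E] {μ : ℝ} (hμ : 0 < μ) {g : E → ℝ}
    (hg : ConvexOn ℝ univ g) : ConvexOn ℝ univ (moreauEnvelope μ g) := by
  obtain ⟨K, hK0, hK⟩ := hg.exists_neg_mul_one_add_norm_le
  have hgfst : ConvexOn ℝ univ fun p : E × E => g p.1 :=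
    hg.comp_linearMap (LinearMap.fst ℝ E E)
  have hdist : ConvexOn ℝ univ fun p : E × E => ‖p.1 - p.2‖ ^ 2 / (2 * μ) := by
    have := ((convexOn_univ_norm.pow (fun _ _ => norm_nonneg _) 2).comp_linearMap
      (LinearMap.fst ℝ E E - LinearMap.snd ℝ E E)).smul (inv_nonneg.mpr (by positivity : 0 ≤ 2 * μ))
    simpa [div_eq_inv_mul] using this
  exact (hgfst.add hdist).ciInf_fst (bddBelow_range_add_norm_sub_sq_div hμ hK0 hK)

end Moreau

section InnerProduct

variable {E : Type*} [NormedAddCommGroup E] [InnerProductSpace ℝ E]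

theorem hasGradientAt_half_inner_map_self_add_inner [CompleteSpace E] {Q : E →L[ℝ] E}
    (hQ : (Q : E →ₗ[ℝ] E).IsSymmetric) (q x : E) :
    HasGradientAt (fun x => 1 / 2 * ⟪x, Q x⟫ + ⟪q, x⟫) (Q x + q) x := by
  rw [hasGradientAt_iff_hasFDerivAt]
  refine ((((hasFDerivAt_id x).inner ℝ Q.hasFDerivAt).const_mul (1 / 2)).add
    (innerSL ℝ q).hasFDerivAt).congr_fderiv (ContinuousLinearMap.ext fun v => ?_)
  simp only [add_apply, smul_apply, ContinuousLinearMap.comp_apply, ContinuousLinearMap.prod_apply,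
    ContinuousLinearMap.coe_id', id_eq, fderivInnerCLM_apply, InnerProductSpace.toDual_apply_apply,
    innerSL_apply_apply, inner_add_left, smul_eq_mul]
  have hsymm : ⟪x, Q v⟫ = ⟪Q x, v⟫ := (hQ x v).symm
  rw [hsymm, real_inner_comm v]
  ring

namespace LinearMap.IsSymmetric

variable {Q : E →ₗ[ℝ] E} (hQ : Q.IsSymmetric)
include hQ

theorem norm_map_sq_le_mul_inner {k : ℝ} (h0 : ∀ x, 0 ≤ ⟪x, Q x⟫)
    (hk : ∀ x, ⟪x, Q x⟫ ≤ k * ‖x‖ ^ 2) (x : E) : ‖Q x‖ ^ 2 ≤ k * ⟪x, Q x⟫ := by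
  have hcs := BilinForm.apply_mul_apply_le_of_forall_zero_le ((innerₗ E).compl₂ Q) h0 x (Q x)
  simp only [compl₂_apply, innerₗ_apply_apply, ← hQ x (Q x), real_inner_self_eq_norm_sq] at hcs
  rcases (norm_nonneg (Q x)).eq_or_lt with hQx | hQx
  · simp [norm_eq_zero.mp hQx.symm]
  · refine le_of_mul_le_mul_right ?_ (pow_pos hQx 2)
    calc ‖Q x‖ ^ 2 * ‖Q x‖ ^ 2 ≤ ⟪x, Q x⟫ * ⟪Q x, Q (Q x)⟫ := hcs
      _ ≤ ⟪x, Q x⟫ * (k * ‖Q x‖ ^ 2) := mul_le_mul_of_nonneg_left (hk (Q x)) (h0 x)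
      _ = k * ⟪x, Q x⟫ * ‖Q x‖ ^ 2 := by ring

theorem norm_map_sq_le {m L : ℝ} (hm : ∀ x, m * ‖x‖ ^ 2 ≤ ⟪x, Q x⟫)
    (hL : ∀ x, ⟪x, Q x⟫ ≤ L * ‖x‖ ^ 2) (x : E) :
    ‖Q x‖ ^ 2 ≤ (m + L) * ⟪x, Q x⟫ - m * L * ‖x‖ ^ 2 := by
  have hinner : ∀ y, ⟪y, (Q - m • 1) y⟫ = ⟪y, Q y⟫ - m * ‖y‖ ^ 2 := fun y => by
    simp [inner_sub_right, real_inner_smul_right]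
  have key := (hQ.sub (IsSymmetric.one.smul rfl)).norm_map_sq_le_mul_inner (k := L - m)
    (fun y => by rw [hinner]; linarith [hm y]) (fun y => by rw [hinner]; linarith [hL y]) x
  rw [hinner, sub_apply, smul_apply, Module.End.one_apply, norm_sub_sq_real, norm_smul,
    real_inner_smul_right, Real.norm_eq_abs, mul_pow, sq_abs, ← hQ x x, real_inner_comm] at key
  linarith

theorem min_mul_norm_sq_le_inner_sub_norm_map_sq {m L μ : ℝ} (hm : ∀ x, m * ‖x‖ ^ 2 ≤ ⟪x, Q x⟫)
    (hL : ∀ x, ⟪x, Q x⟫ ≤ L * ‖x‖ ^ 2) (hμ : 0 ≤ μ) (x : E) :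
    min ((1 - μ * m) * m) ((1 - μ * L) * L) * ‖x‖ ^ 2 ≤ ⟪x, Q x⟫ - μ * ‖Q x‖ ^ 2 := by
  have hQx := mul_le_mul_of_nonneg_left (hQ.norm_map_sq_le hm hL x) hμ
  rcases le_total 0 (1 - μ * (m + L)) with hc | hc
  · have := mul_le_mul_of_nonneg_left (hm x) hc
    nlinarith [min_le_left ((1 - μ * m) * m) ((1 - μ * L) * L), sq_nonneg ‖x‖]
  · have := mul_le_mul_of_nonpos_left (hL x) hc
    nlinarith [min_le_right ((1 - μ * m) * m) ((1 - μ * L) * L), sq_nonneg ‖x‖]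

theorem convexOn_quadratic_sub_norm_gradient_sq {m L μ : ℝ} (hm : ∀ x, m * ‖x‖ ^ 2 ≤ ⟪x, Q x⟫)
    (hL : ∀ x, ⟪x, Q x⟫ ≤ L * ‖x‖ ^ 2) (hμ : 0 ≤ μ) (q : E) :
    ConvexOn ℝ univ fun x => 1 / 2 * ⟪x, Q x⟫ + ⟪q, x⟫ - μ / 2 * ‖Q x + q‖ ^ 2
      - min ((1 - μ * m) * m) ((1 - μ * L) * L) / 2 * ‖x‖ ^ 2 := by
  set mt := min ((1 - μ * m) * m) ((1 - μ * L) * L)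
  let B : LinearMap.BilinForm ℝ E :=
    (innerₗ E).compl₂ Q - μ • (innerₗ E).compl₁₂ Q Q - mt • innerₗ E
  have hB : ∀ x, B x x = ⟪x, Q x⟫ - μ * ‖Q x‖ ^ 2 - mt * ‖x‖ ^ 2 := fun x => by simp [B]
  have hBconv := B.convexOn_apply_self fun x => by
    rw [hB]; linarith [hQ.min_mul_norm_sq_le_inner_sub_norm_map_sq hm hL hμ x]
  have := ((hBconv.smul (by norm_num : (0 : ℝ) ≤ 1 / 2)).add
    ((innerₗ E (q - μ • Q q)).convexOn convex_univ)).add_const (-(μ / 2 * ‖q‖ ^ 2))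
  refine this.congr fun x _ => ?_
  simp only [Pi.add_apply, hB, smul_eq_mul, innerₗ_apply_apply, inner_sub_left,
    real_inner_smul_left, norm_add_sq_real, ← hQ x q, real_inner_comm x (Q q)]
  ring

end LinearMap.IsSymmetric

end InnerProduct

theorem FB_envelope_strongly_convex_quadratic_general {n : ℕ}
    (Q : EuclideanSpace ℝ (Fin n) →L[ℝ] EuclideanSpace ℝ (Fin n))
    (q : EuclideanSpace ℝ (Fin n)) (g : EuclideanSpace ℝ (Fin n) → ℝ)
    (m L μ mt : ℝ)
    (hQsym : ∀ x y : EuclideanSpace ℝ (Fin n), ⟪Q x, y⟫ = ⟪x, Q y⟫)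
    (hQm : ∀ x : EuclideanSpace ℝ (Fin n), m * ‖x‖ ^ 2 ≤ ⟪x, Q x⟫)
    (hQL : ∀ x : EuclideanSpace ℝ (Fin n), ⟪x, Q x⟫ ≤ L * ‖x‖ ^ 2)
    (f : EuclideanSpace ℝ (Fin n) → ℝ)
    (hf : ∀ x, f x = (1 / 2) * ⟪x, Q x⟫ + ⟪q, x⟫)
    (hgconv : ConvexOn ℝ univ g)
    (hμ : μ ∈ Ioo 0 (1 / L))
    (hmt : mt = min ((1 - μ * m) * m) ((1 - μ * L) * L))
    (M : EuclideanSpace ℝ (Fin n) → ℝ)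
    (hM : ∀ v, M v = ⨅ z : EuclideanSpace ℝ (Fin n), (g z + ‖z - v‖ ^ 2 / (2 * μ)))
    (Fμ : EuclideanSpace ℝ (Fin n) → ℝ)
    (hFμ : ∀ x, Fμ x = f x + M (x - μ • gradient f x) - μ / 2 * ‖gradient f x‖ ^ 2) :
    ConvexOn ℝ univ (fun x => Fμ x - mt / 2 * ‖x‖ ^ 2) := by
  subst hmt
  have hQ : (Q : EuclideanSpace ℝ (Fin n) →ₗ[ℝ] EuclideanSpace ℝ (Fin n)).IsSymmetric := hQsym
  have hgrad : ∀ x, gradient f x = Q x + q := fun x => by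
    rw [funext hf]
    exact (hasGradientAt_half_inner_map_self_add_inner hQ q x).gradient
  have hMT : ConvexOn ℝ univ fun x => M (x - μ • (Q x + q)) := by
    rw [show M = moreauEnvelope μ g from funext hM]
    refine ((hgconv.moreauEnvelope hμ.1).comp_affineMap
      (LinearMap.toAffineMap
          (LinearMap.id - μ • (Q : EuclideanSpace ℝ (Fin n) →ₗ[ℝ] EuclideanSpace ℝ (Fin n)))
        + AffineMap.const ℝ _ (-(μ • q)))).congr fun x _ => congrArg (moreauEnvelope μ g) ?_
    simp only [AffineMap.coe_add, Pi.add_apply, LinearMap.coe_toAffineMap, AffineMap.const_apply,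
      LinearMap.sub_apply, LinearMap.smul_apply, LinearMap.id_apply, ContinuousLinearMap.coe_coe]
    module
  refine (hMT.add (hQ.convexOn_quadratic_sub_norm_gradient_sq hQm hQL hμ.1.le q)).congr
    fun x _ => ?_
  simp only [Pi.add_apply, hFμ, hf, hgrad, ContinuousLinearMap.coe_coe]
  ring

/-- Lemma 2, forward–backward strong convexity: for a convex
quadratic `f`, the forward–backward envelope is
`m̃ = min{(1 - μm)m, (1 - μL)L}`-strongly convex. -/
theorem FB_envelope_strongly_convex_quadratic {n : ℕ}
    (Q : EuclideanSpace ℝ (Fin n) →L[ℝ] EuclideanSpace ℝ (Fin n))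
    (q : EuclideanSpace ℝ (Fin n)) (g : EuclideanSpace ℝ (Fin n) → ℝ)
    (m L μ mt : ℝ)
    (hQsym : ∀ x y : EuclideanSpace ℝ (Fin n), ⟪Q x, y⟫ = ⟪x, Q y⟫)
    (hm : 0 ≤ m) (hL : 0 < L)
    (hQm : ∀ x : EuclideanSpace ℝ (Fin n), m * ‖x‖ ^ 2 ≤ ⟪x, Q x⟫)
    (hQmmin : ∃ x : EuclideanSpace ℝ (Fin n), x ≠ 0 ∧ ⟪x, Q x⟫ = m * ‖x‖ ^ 2)
    (hQL : ∀ x : EuclideanSpace ℝ (Fin n), ⟪x, Q x⟫ ≤ L * ‖x‖ ^ 2)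
    (hQLmax : ∃ x : EuclideanSpace ℝ (Fin n), x ≠ 0 ∧ ⟪x, Q x⟫ = L * ‖x‖ ^ 2)
    (f : EuclideanSpace ℝ (Fin n) → ℝ)
    (hf : ∀ x, f x = (1 / 2) * ⟪x, Q x⟫ + ⟪q, x⟫)
    (hgconv : ConvexOn ℝ univ g) (hglsc : LowerSemicontinuous g)
    (hμ : μ ∈ Ioo 0 (1 / L))
    (hmt : mt = min ((1 - μ * m) * m) ((1 - μ * L) * L))
    (M : EuclideanSpace ℝ (Fin n) → ℝ)
    (hM : ∀ v, M v = ⨅ z : EuclideanSpace ℝ (Fin n), (g z + ‖z - v‖ ^ 2 / (2 * μ)))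
    (Fμ : EuclideanSpace ℝ (Fin n) → ℝ)
    (hFμ : ∀ x, Fμ x = f x + M (x - μ • gradient f x) - μ / 2 * ‖gradient f x‖ ^ 2) :
    ConvexOn ℝ univ (fun x => Fμ x - mt / 2 * ‖x‖ ^ 2) :=
  FB_envelope_strongly_convex_quadratic_general Q q g m L μ mt hQsym hQm hQL f hf hgconv hμ hmt M hM
    Fμ hFμ
end
end

section
/- Let f(x) = (1/2)⟨x, Qx⟩ + ⟨q, x⟩ with Q symmetric positive semidefinite with smallest eigenvalue m ≥ 0 and largest eigenvalue L > 0, let g : ℝⁿ → ℝ be convex and lower semicontinuous, and let μ ∈ (0, 1/L). Set L̃ = (1 − μm)/(μ(1 + μm)²). Then the Douglas–Rachford envelope D_μ(z) = F_μ(prox_{μf}(z)) is convex and differentiable, and its gradient ∇D_μ is Lipschitz continuous with constant L̃. -/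
/-!
For quadratic `f` the proximal map `prox_{μf} z = P (z - μq)`, `P = (I + μQ)⁻¹`, is affine with a
symmetric linear part, so `D_μ = F_μ ∘ prox_{μf}` and all claims reduce to statements about Bregman
divergences `φ y - φ x - ⟪G x, y - x⟫`. The Bregman divergence of `F_μ` splits into
`½ (⟪d, Q d⟫ - μ ‖Q d‖²)`, which is nonnegative because `μL ≤ 1`, plus the Bregman divergence of
the Moreau envelope `M_{μg}` between the two forward steps, which lies in `[0, ‖·‖² / (2μ)]` by the
three-point inequality of the proximal map. Being squeezed between `0` and a quadratic, `D_μ` is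
convex and differentiable with `∇D_μ z = μ⁻¹ (2P - I) (x - prox_{μg} (2x - z))`, `x = prox_{μf} z`.
Finally `2P - I` is a `(1 - μm)/(1 + μm)`-contraction, `2 prox_{μg} - I` is nonexpansive, and
`2 (x - prox_{μg} (2x - z)) = z - (2 prox_{μg} - I) (2x - z)`, so `∇D_μ` is Lipschitz with
constant `μ⁻¹ · (1 - μm)/(1 + μm) · 1/(1 + μm) = L̃`.
-/

open Set RealInnerProductSpace Filter Topology

noncomputable section

variable {E : Type*} [NormedAddCommGroup E]

def IsProxPoint (g : E → ℝ) (μ : ℝ) (v p : E) : Prop :=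
  IsMinOn (fun z => g z + ‖z - v‖ ^ 2 / (2 * μ)) univ p

def moreauEnv (g : E → ℝ) (μ : ℝ) (v : E) : ℝ := ⨅ z, g z + ‖z - v‖ ^ 2 / (2 * μ)

theorem moreauEnv_le {g : E → ℝ} {μ : ℝ} {v p : E} (hp : IsProxPoint g μ v p) (z : E) :
    moreauEnv g μ v ≤ g z + ‖z - v‖ ^ 2 / (2 * μ) :=
  ciInf_le ⟨_, forall_mem_range.2 fun z => hp (mem_univ z)⟩ z

theorem IsProxPoint.moreauEnv_eq {g : E → ℝ} {μ : ℝ} {v p : E} (hp : IsProxPoint g μ v p) :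
    moreauEnv g μ v = g p + ‖p - v‖ ^ 2 / (2 * μ) :=
  le_antisymm (moreauEnv_le hp p) (le_ciInf fun z => hp (mem_univ z))

variable [InnerProductSpace ℝ E]

def bregman (φ : E → ℝ) (G : E → E) (x y : E) : ℝ := φ y - φ x - ⟪G x, y - x⟫

theorem convexOn_univ_of_bregman_nonneg {φ : E → ℝ} {G : E → E}
    (h : ∀ x y, 0 ≤ bregman φ G x y) : ConvexOn ℝ univ φ := by
  refine ⟨convex_univ, fun y₁ _ y₂ _ a b ha hb hab => ?_⟩
  set x := a • y₁ + b • y₂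
  have hx : a • (y₁ - x) + b • (y₂ - x) = 0 := by
    obtain rfl : b = 1 - a := by linarith
    simp only [x]; module
  have hinner : a * ⟪G x, y₁ - x⟫ + b * ⟪G x, y₂ - x⟫ = 0 := by
    rw [← real_inner_smul_right, ← real_inner_smul_right, ← inner_add_right, hx, inner_zero_right]
  have h₁ := mul_nonneg ha (h x y₁)
  have h₂ := mul_nonneg hb (h x y₂)
  have hφx : a * φ x + b * φ x = φ x := by rw [← add_mul, hab, one_mul]
  simp only [bregman, smul_eq_mul] at h₁ h₂ ⊢
  nlinarith

theorem hasGradientAt_of_abs_bregman_le [CompleteSpace E] {φ : E → ℝ} {G : E → E} {x : E}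
    {C : ℝ} (h : ∀ y, |bregman φ G x y| ≤ C * ‖y - x‖ ^ 2) : HasGradientAt φ (G x) x := by
  rw [hasGradientAt_iff_hasFDerivAt, hasFDerivAt_iff_isLittleO_nhds_zero]
  refine Asymptotics.IsBigO.trans_isLittleO ?_ (Asymptotics.isLittleO_norm_pow_id one_lt_two)
  refine Asymptotics.IsBigO.of_bound C (Eventually.of_forall fun v => ?_)
  simpa [bregman] using h (x + v)

theorem bregman_add {φ ψ : E → ℝ} {G H : E → E} (x y : E) :
    bregman (fun z => φ z + ψ z) (fun z => G z + H z) x y = bregman φ G x y + bregman ψ H x y := by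
  simp only [bregman, inner_add_left]; ring

theorem bregman_comp_affine {T : E →ₗ[ℝ] E} (hT : T.IsSymmetric) (c : E) (ψ : E → ℝ) (H : E → E)
    (x y : E) :
    bregman (fun z => ψ (T z - c)) (fun z => T (H (T z - c))) x y
      = bregman ψ H (T x - c) (T y - c) := by
  simp only [bregman, sub_sub_sub_cancel_right, ← map_sub, hT _ (y - x)]

theorem le_of_forall_le_add_mul {a b K : ℝ} (h : ∀ t ∈ Ioc (0 : ℝ) 1, a ≤ b + t * K) :
    a ≤ b := by
  have hlim : Tendsto (fun t => b + t * K) (𝓝[>] 0) (𝓝 b) :=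
    ((by fun_prop : Continuous fun t : ℝ => b + t * K).tendsto' 0 b (by simp)).mono_left
      nhdsWithin_le_nhds
  exact ge_of_tendsto hlim (by filter_upwards [Ioc_mem_nhdsGT one_pos] with t ht using h t ht)

section Prox

variable {g : E → ℝ} {μ : ℝ}

theorem prox_objective_sub_eq (hμ : μ ≠ 0) (v p z : E) :
    g z + ‖z - v‖ ^ 2 / (2 * μ) - (g p + ‖p - v‖ ^ 2 / (2 * μ))
      = g z - g p - ⟪v - p, z - p⟫ / μ + ‖z - p‖ ^ 2 / (2 * μ) := by
  have h : z - v = (z - p) - (v - p) := by abel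
  rw [h, norm_sub_sq_real, real_inner_comm, ← norm_neg (v - p), neg_sub]
  field_simp
  ring

theorem isProxPoint_of_inner_le (hμ : 0 < μ) {v p : E}
    (h : ∀ z, ⟪v - p, z - p⟫ ≤ μ * (g z - g p)) : IsProxPoint g μ v p := by
  intro z _
  have hz := prox_objective_sub_eq (g := g) hμ.ne' v p z
  have h₁ : ⟪v - p, z - p⟫ / μ ≤ g z - g p := by rw [div_le_iff₀ hμ]; linarith [h z]
  have h₂ : 0 ≤ ‖z - p‖ ^ 2 / (2 * μ) := by positivity
  show g p + ‖p - v‖ ^ 2 / (2 * μ) ≤ g z + ‖z - v‖ ^ 2 / (2 * μ)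
  linarith

theorem IsProxPoint.inner_le (hg : ConvexOn ℝ univ g) (hμ : 0 < μ) {v p : E}
    (hp : IsProxPoint g μ v p) (z : E) : ⟪v - p, z - p⟫ ≤ μ * (g z - g p) := by
  -- compare `p` with `p + t • (z - p)` and let `t → 0`
  refine le_of_forall_le_add_mul (K := ‖z - p‖ ^ 2 / 2) fun t ⟨ht₀, ht₁⟩ => ?_
  set zt := (1 - t) • p + t • z
  have hzt : zt - p = t • (z - p) := by simp only [zt]; module
  have hmin := prox_objective_sub_eq (g := g) hμ.ne' v p zt
  rw [hzt, real_inner_smul_right, norm_smul, Real.norm_of_nonneg ht₀.le] at hmin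
  have hconv : g zt ≤ (1 - t) * g p + t * g z :=
    hg.2 (mem_univ p) (mem_univ z) (by linarith) ht₀.le (by ring)
  have hopt : 0 ≤ g zt + ‖zt - v‖ ^ 2 / (2 * μ) - (g p + ‖p - v‖ ^ 2 / (2 * μ)) :=
    sub_nonneg.2 (hp (mem_univ zt))
  rw [hmin, mul_pow] at hopt
  have key : t * ⟪v - p, z - p⟫ ≤ t * (μ * (g z - g p) + t * (‖z - p‖ ^ 2 / 2)) :=
    calc t * ⟪v - p, z - p⟫
        ≤ (t * (g z - g p) + t ^ 2 * ‖z - p‖ ^ 2 / (2 * μ)) * μ := by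
          rw [← div_le_iff₀ hμ]; linarith
      _ = t * (μ * (g z - g p) + t * (‖z - p‖ ^ 2 / 2)) := by field_simp
  exact le_of_mul_le_mul_left key ht₀

theorem IsProxPoint.norm_sub_sq_le_inner (hg : ConvexOn ℝ univ g) (hμ : 0 < μ) {v₁ v₂ p₁ p₂ : E}
    (hp₁ : IsProxPoint g μ v₁ p₁) (hp₂ : IsProxPoint g μ v₂ p₂) :
    ‖p₁ - p₂‖ ^ 2 ≤ ⟪p₁ - p₂, v₁ - v₂⟫ := by
  have h₁ := hp₁.inner_le hg hμ p₂
  have h₂ := hp₂.inner_le hg hμ p₁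
  have e : ⟪v₁ - p₁, p₂ - p₁⟫ + ⟪v₂ - p₂, p₁ - p₂⟫ = ‖p₁ - p₂‖ ^ 2 - ⟪p₁ - p₂, v₁ - v₂⟫ := by
    rw [← neg_sub p₁ p₂, inner_neg_right, real_inner_comm (v₁ - v₂), ← real_inner_self_eq_norm_sq,
      ← inner_neg_left, ← inner_add_left, ← inner_sub_left]
    congr 1; abel
  linarith

theorem IsProxPoint.eq (hg : ConvexOn ℝ univ g) (hμ : 0 < μ) {v p₁ p₂ : E}
    (hp₁ : IsProxPoint g μ v p₁) (hp₂ : IsProxPoint g μ v p₂) : p₁ = p₂ := by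
  have h := hp₁.norm_sub_sq_le_inner hg hμ hp₂
  rw [sub_self, inner_zero_right] at h
  exact sub_eq_zero.1 (norm_eq_zero.1 (pow_eq_zero_iff two_ne_zero |>.1
    (le_antisymm h (sq_nonneg _))))

theorem IsProxPoint.norm_two_smul_sub_le (hg : ConvexOn ℝ univ g) (hμ : 0 < μ) {v₁ v₂ p₁ p₂ : E}
    (hp₁ : IsProxPoint g μ v₁ p₁) (hp₂ : IsProxPoint g μ v₂ p₂) :
    ‖(2 : ℝ) • (p₁ - p₂) - (v₁ - v₂)‖ ≤ ‖v₁ - v₂‖ := by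
  have h := hp₁.norm_sub_sq_le_inner hg hμ hp₂
  refine (sq_le_sq₀ (norm_nonneg _) (norm_nonneg _)).1 ?_
  rw [norm_sub_sq_real, norm_smul, real_inner_smul_left]
  norm_num
  nlinarith

theorem bregman_moreauEnv_nonneg {p : E → E} (hg : ConvexOn ℝ univ g) (hμ : 0 < μ)
    (hp : ∀ v, IsProxPoint g μ v (p v)) (v w : E) :
    0 ≤ bregman (moreauEnv g μ) (fun v => μ⁻¹ • (v - p v)) v w := by
  have hsub := (hp v).inner_le hg hμ (p w)
  rw [bregman, (hp w).moreauEnv_eq, (hp v).moreauEnv_eq, real_inner_smul_left,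
    ← norm_neg (p v - v), neg_sub]
  set a := p w - p v
  set b := v - p v
  set d := w - v
  have hw : p w - w = (a - d) - b := by simp only [a, b, d]; abel
  have hsub' : ⟪b, a⟫ / μ ≤ g (p w) - g (p v) := by rw [div_le_iff₀ hμ]; linarith
  have hsq : 0 ≤ ‖a - d‖ ^ 2 / (2 * μ) := by positivity
  have e : g (p w) + ‖p w - w‖ ^ 2 / (2 * μ) - (g (p v) + ‖b‖ ^ 2 / (2 * μ)) - μ⁻¹ * ⟪b, d⟫
      = (g (p w) - g (p v) - ⟪b, a⟫ / μ) + ‖a - d‖ ^ 2 / (2 * μ) := by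
    rw [hw, norm_sub_sq_real, inner_sub_left, real_inner_comm a, real_inner_comm d]
    field_simp
    ring
  linarith

theorem bregman_moreauEnv_le {p : E → E} (hμ : 0 < μ) (hp : ∀ v, IsProxPoint g μ v (p v))
    (v w : E) :
    bregman (moreauEnv g μ) (fun v => μ⁻¹ • (v - p v)) v w ≤ ‖w - v‖ ^ 2 / (2 * μ) := by
  have hle := moreauEnv_le (hp w) (p v)
  rw [bregman, (hp v).moreauEnv_eq, real_inner_smul_left, ← norm_neg (p v - v), neg_sub]
  have e : ‖p v - w‖ ^ 2 / (2 * μ)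
      = ‖v - p v‖ ^ 2 / (2 * μ) + μ⁻¹ * ⟪v - p v, w - v⟫ + ‖w - v‖ ^ 2 / (2 * μ) := by
    rw [show p v - w = -((v - p v) + (w - v)) by abel, norm_neg, norm_add_sq_real]
    field_simp
  linarith

end Prox

theorem exists_isProxPoint [FiniteDimensional ℝ E] {g : E → ℝ} {μ : ℝ} (hg : ConvexOn ℝ univ g)
    (hμ : 0 < μ) (v : E) : ∃ p, IsProxPoint g μ v p := by
  -- `g` is continuous and has an affine minorant, so the objective is coercive
  have hcont : Continuous g := continuousOn_univ.1 (hg.continuousOn isOpen_univ)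
  obtain ⟨l, c, hlc, -⟩ := hg.exists_affine_le_of_lt (𝕜 := ℝ) (mem_univ 0) (sub_one_lt (g 0))
    isClosed_univ (hcont.lowerSemicontinuous.lowerSemicontinuousOn univ)
  have hminor : ∀ z, l v - ‖l‖ * ‖z - v‖ + c ≤ g z := fun z => by
    have h₁ : l z + c ≤ g z := by simpa using hlc ⟨z, mem_univ z⟩
    have h₂ : |l (z - v)| ≤ ‖l‖ * ‖z - v‖ := l.le_opNorm (z - v)
    rw [map_sub] at h₂
    linarith [neg_abs_le (l z - l v)]
  have hdist : Tendsto (fun z => ‖z - v‖) (cocompact E) atTop :=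
    tendsto_atTop_mono (fun z => norm_sub_norm_le z v)
      (by simpa [sub_eq_add_neg] using
        tendsto_atTop_add_const_right _ (-‖v‖) tendsto_norm_cocompact_atTop)
  have hquad : Tendsto (fun r => r * (r / (2 * μ) - ‖l‖) + (l v + c)) atTop atTop :=
    tendsto_atTop_add_const_right _ _ (tendsto_id.atTop_mul_atTop₀
      (tendsto_atTop_add_const_right _ _ (tendsto_id.atTop_div_const (by positivity))))
  have hcoercive : Tendsto (fun z => g z + ‖z - v‖ ^ 2 / (2 * μ)) (cocompact E) atTop := by
    refine tendsto_atTop_mono (fun z => ?_) (hquad.comp hdist)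
    have := hminor z
    simp only [Function.comp_apply]
    field_simp
    nlinarith
  obtain ⟨p, hp⟩ := (hcont.add (by fun_prop)).exists_forall_le hcoercive
  exact ⟨p, fun z _ => hp z⟩

namespace LinearMap.IsSymmetric

variable {S : E →ₗ[ℝ] E} {m L μ : ℝ}

theorem inner_map_sq_le (hS : S.IsSymmetric) (hpos : ∀ x, 0 ≤ ⟪x, S x⟫) (x y : E) :
    ⟪x, S y⟫ ^ 2 ≤ ⟪x, S x⟫ * ⟪y, S y⟫ := by
  have hdisc := discrim_le_zero (a := ⟪y, S y⟫) (b := 2 * ⟪x, S y⟫) (c := ⟪x, S x⟫) fun t => by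
    have h := hpos (x + t • y)
    simp only [map_add, map_smul, inner_add_left, inner_add_right, real_inner_smul_left,
      real_inner_smul_right, ← hS y x, real_inner_comm x (S y)] at h
    linarith
  rw [discrim] at hdisc
  linarith

theorem norm_map_sq_le_s9 (hS : S.IsSymmetric) {β : ℝ} (hβ : 0 ≤ β) (hpos : ∀ x, 0 ≤ ⟪x, S x⟫)
    (hle : ∀ x, ⟪x, S x⟫ ≤ β * ‖x‖ ^ 2) (x : E) : ‖S x‖ ^ 2 ≤ β * ⟪x, S x⟫ := by
  have hcs := hS.inner_map_sq_le hpos x (S x)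
  rw [← hS, real_inner_self_eq_norm_sq] at hcs
  have h := mul_le_mul_of_nonneg_left (hle (S x)) (hpos x)
  rcases (sq_nonneg ‖S x‖).eq_or_lt with h0 | h0
  · rw [← h0]; exact mul_nonneg hβ (hpos x)
  · nlinarith

theorem norm_map_sq_le_of_bounds (hS : S.IsSymmetric)
    (hm : ∀ x, m * ‖x‖ ^ 2 ≤ ⟪x, S x⟫) (hL : ∀ x, ⟪x, S x⟫ ≤ L * ‖x‖ ^ 2) (x : E) :
    ‖S x‖ ^ 2 ≤ (m + L) * ⟪x, S x⟫ - m * L * ‖x‖ ^ 2 := by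
  rcases eq_or_ne x 0 with rfl | hx
  · simp
  have hmL : m ≤ L := by
    have := (hm x).trans (hL x)
    exact le_of_mul_le_mul_right this (by positivity)
  set S' := S - m • (1 : E →ₗ[ℝ] E)
  have hS'apply : ∀ y, S' y = S y - m • y := fun y => rfl
  have hS'inner : ∀ y, ⟪y, S' y⟫ = ⟪y, S y⟫ - m * ‖y‖ ^ 2 := fun y => by
    rw [hS'apply, inner_sub_right, real_inner_smul_right, real_inner_self_eq_norm_sq]
  have hS' : S'.IsSymmetric := hS.sub (LinearMap.IsSymmetric.one.smul (conj_trivial m))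
  have hco := hS'.norm_map_sq_le_s9 (sub_nonneg.2 hmL) (fun y => by rw [hS'inner]; linarith [hm y])
    (fun y => by rw [hS'inner]; linarith [hL y]) x
  rw [hS'inner, hS'apply, norm_sub_sq_real, real_inner_smul_right, norm_smul, mul_pow,
    Real.norm_eq_abs, sq_abs, real_inner_comm] at hco
  nlinarith

theorem norm_sub_smul_map_le_norm (hS : S.IsSymmetric) (hpos : ∀ x, 0 ≤ ⟪x, S x⟫)
    (hL : ∀ x, ⟪x, S x⟫ ≤ L * ‖x‖ ^ 2) (hμ : 0 ≤ μ) (hμL : μ * L ≤ 2) (x : E) :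
    ‖x - μ • S x‖ ≤ ‖x‖ := by
  have hco := hS.norm_map_sq_le_of_bounds (m := 0) (by simpa using hpos) hL x
  refine (sq_le_sq₀ (norm_nonneg _) (norm_nonneg _)).1 ?_
  rw [norm_sub_sq_real, real_inner_smul_right, norm_smul, mul_pow, Real.norm_eq_abs, sq_abs]
  nlinarith [mul_le_mul_of_nonneg_left hco (sq_nonneg μ), mul_nonneg hμ (hpos x)]

/-- On an eigenvector with eigenvalue `λ ∈ [m, L]` this reads
`(1 + μm) |1 - μλ| ≤ (1 - μm) (1 + μλ)`. -/
theorem norm_sub_smul_map_le (hS : S.IsSymmetric) (hm₀ : 0 ≤ m)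
    (hm : ∀ x, m * ‖x‖ ^ 2 ≤ ⟪x, S x⟫) (hL : ∀ x, ⟪x, S x⟫ ≤ L * ‖x‖ ^ 2) (hμ : 0 ≤ μ)
    (hμm : μ * m ≤ 1) (hμL : μ * L ≤ 1) (x : E) :
    (1 + μ * m) * ‖x - μ • S x‖ ≤ (1 - μ * m) * ‖x + μ • S x‖ := by
  have hco := hS.norm_map_sq_le_of_bounds hm hL x
  refine (sq_le_sq₀ (by positivity) (mul_nonneg (by linarith) (norm_nonneg _))).1 ?_
  rw [mul_pow, mul_pow, norm_sub_sq_real, norm_add_sq_real, real_inner_smul_right, norm_smul,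
    mul_pow, Real.norm_eq_abs, sq_abs]
  have h₁ : 0 ≤ (⟪x, S x⟫ - m * ‖x‖ ^ 2) * (1 - μ * m * (μ * L)) :=
    mul_nonneg (by linarith [hm x]) (by nlinarith [mul_nonneg hμ hm₀])
  have h₂ := mul_le_mul_of_nonneg_left hco (by positivity : 0 ≤ μ ^ 3 * m)
  nlinarith [mul_nonneg hμ h₁]

end LinearMap.IsSymmetric

/-- `(I + μQ)⁻¹`. `Ring.inverse` is `0` on non-units; `I + μQ` is a unit for `Q ≥ 0`, `μ ≥ 0`. -/
def resolventOp (Q : E →L[ℝ] E) (μ : ℝ) : E →ₗ[ℝ] E := Ring.inverse (1 + μ • (Q : E →ₗ[ℝ] E))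

section Resolvent

variable [FiniteDimensional ℝ E] {Q : E →L[ℝ] E} {μ : ℝ}

theorem isUnit_one_add_smul (hpos : ∀ x, 0 ≤ ⟪x, Q x⟫) (hμ : 0 ≤ μ) :
    IsUnit (1 + μ • (Q : E →ₗ[ℝ] E)) := by
  refine (LinearMap.isUnit_iff_ker_eq_bot _).2 (LinearMap.ker_eq_bot'.2 fun x hx => ?_)
  have h : ⟪x, x + μ • Q x⟫ = 0 := by simpa using congrArg (⟪x, ·⟫) hx
  rw [inner_add_right, real_inner_smul_right, real_inner_self_eq_norm_sq] at h
  have : ‖x‖ ^ 2 ≤ 0 := by nlinarith [mul_nonneg hμ (hpos x)]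
  exact norm_eq_zero.1 (pow_eq_zero_iff two_ne_zero |>.1 (le_antisymm this (sq_nonneg _)))

theorem resolventOp_add_smul (hpos : ∀ x, 0 ≤ ⟪x, Q x⟫) (hμ : 0 ≤ μ) (w : E) :
    resolventOp Q μ w + μ • Q (resolventOp Q μ w) = w := by
  simpa [resolventOp] using
    LinearMap.congr_fun (Ring.mul_inverse_cancel _ (isUnit_one_add_smul hpos hμ)) w

theorem resolventOp_apply_add_smul (hpos : ∀ x, 0 ≤ ⟪x, Q x⟫) (hμ : 0 ≤ μ) (x : E) :
    resolventOp Q μ (x + μ • Q x) = x := by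
  have h := LinearMap.congr_fun (Ring.inverse_mul_cancel _ (isUnit_one_add_smul hpos hμ)) x
  rwa [Module.End.mul_apply, Module.End.one_apply, LinearMap.add_apply, LinearMap.smul_apply,
    Module.End.one_apply, ContinuousLinearMap.coe_coe] at h

theorem isSymmetric_resolventOp (hQ : (Q : E →ₗ[ℝ] E).IsSymmetric) (hpos : ∀ x, 0 ≤ ⟪x, Q x⟫)
    (hμ : 0 ≤ μ) : (resolventOp Q μ).IsSymmetric := fun u v => by
  conv_lhs => rw [← resolventOp_add_smul hpos hμ v]
  conv_rhs => rw [← resolventOp_add_smul hpos hμ u]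
  rw [inner_add_right, inner_add_left, real_inner_smul_left, real_inner_smul_right]
  rw [hQ.apply_clm]

theorem norm_resolventOp_le (hpos : ∀ x, 0 ≤ ⟪x, Q x⟫) (hμ : 0 ≤ μ) (w : E) :
    ‖resolventOp Q μ w‖ ≤ ‖w‖ := by
  set x := resolventOp Q μ w
  have h : ‖x‖ ^ 2 ≤ ‖x‖ * ‖w‖ := by
    calc ‖x‖ ^ 2 ≤ ⟪x, x + μ • Q x⟫ := by
          rw [inner_add_right, real_inner_smul_right, real_inner_self_eq_norm_sq]
          nlinarith [mul_nonneg hμ (hpos x)]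
      _ = ⟪x, w⟫ := by rw [resolventOp_add_smul hpos hμ w]
      _ ≤ ‖x‖ * ‖w‖ := real_inner_le_norm x w
  nlinarith [norm_nonneg x, norm_nonneg w]

theorem resolventOp_sub_smul (hpos : ∀ x, 0 ≤ ⟪x, Q x⟫) (hμ : 0 ≤ μ) (w : E) :
    resolventOp Q μ (w - μ • Q w) = (2 : ℝ) • resolventOp Q μ w - w := by
  have h : w - μ • Q w = (2 : ℝ) • w - (w + μ • Q w) := by module
  rw [h, map_sub, map_smul, resolventOp_apply_add_smul hpos hμ]

theorem norm_two_smul_resolventOp_sub_le (hQ : (Q : E →ₗ[ℝ] E).IsSymmetric) {m L : ℝ}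
    (hm₀ : 0 ≤ m) (hm : ∀ x, m * ‖x‖ ^ 2 ≤ ⟪x, Q x⟫) (hL : ∀ x, ⟪x, Q x⟫ ≤ L * ‖x‖ ^ 2)
    (hμ : 0 ≤ μ) (hμm : μ * m ≤ 1) (hμL : μ * L ≤ 1) (w : E) :
    (1 + μ * m) * ‖(2 : ℝ) • resolventOp Q μ w - w‖ ≤ (1 - μ * m) * ‖w‖ := by
  have hpos : ∀ x, 0 ≤ ⟪x, Q x⟫ := fun x => le_trans (by positivity) (hm x)
  have h := hQ.norm_sub_smul_map_le hm₀ hm hL hμ hμm hμL (resolventOp Q μ w)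
  simp only [ContinuousLinearMap.coe_coe, resolventOp_add_smul hpos hμ] at h
  have e : (2 : ℝ) • resolventOp Q μ w - w = resolventOp Q μ w - μ • Q (resolventOp Q μ w) := by
    linear_combination (norm := module) resolventOp_add_smul hpos hμ w
  rwa [e]

end Resolvent

def quadratic (Q : E →L[ℝ] E) (q : E) (x : E) : ℝ := 1 / 2 * ⟪x, Q x⟫ + ⟪q, x⟫

section Quadratic

variable {Q : E →L[ℝ] E} {q : E} {μ : ℝ}

theorem bregman_quadratic (hQ : (Q : E →ₗ[ℝ] E).IsSymmetric) (x y : E) :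
    bregman (quadratic Q q) (fun x => Q x + q) x y = 1 / 2 * ⟪y - x, Q (y - x)⟫ := by
  obtain ⟨d, rfl⟩ : ∃ d, y = x + d := ⟨y - x, by abel⟩
  simp only [bregman, quadratic, add_sub_cancel_left, map_add, inner_add_left, inner_add_right,
    ← hQ.apply_clm x d, real_inner_comm (Q x) d]
  ring

theorem bregman_quadratic_sub_norm_sq (hQ : (Q : E →ₗ[ℝ] E).IsSymmetric) (x y : E) :
    bregman (fun x => quadratic Q q x - μ / 2 * ‖Q x + q‖ ^ 2)
      (fun x => (Q x + q) - μ • Q (Q x + q)) x y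
      = 1 / 2 * (⟪y - x, Q (y - x)⟫ - μ * ‖Q (y - x)‖ ^ 2) := by
  have h := bregman_quadratic (q := q) hQ x y
  obtain ⟨d, rfl⟩ : ∃ d, y = x + d := ⟨y - x, by abel⟩
  simp only [bregman, add_sub_cancel_left] at h ⊢
  rw [map_add, add_right_comm, norm_add_sq_real, inner_sub_left, real_inner_smul_left,
    hQ.apply_clm]
  linarith

theorem hasGradientAt_quadratic [CompleteSpace E] (hQ : (Q : E →ₗ[ℝ] E).IsSymmetric) (x : E) :
    HasGradientAt (quadratic Q q) (Q x + q) x := by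
  refine hasGradientAt_of_abs_bregman_le (G := fun x => Q x + q) (C := ‖Q‖) fun y => ?_
  rw [bregman_quadratic hQ, abs_mul, abs_of_pos (by norm_num : (0 : ℝ) < 1 / 2)]
  calc 1 / 2 * |⟪y - x, Q (y - x)⟫| ≤ 1 / 2 * (‖y - x‖ * (‖Q‖ * ‖y - x‖)) := by
        gcongr
        exact (abs_real_inner_le_norm _ _).trans (by gcongr; exact Q.le_opNorm _)
    _ ≤ ‖Q‖ * ‖y - x‖ ^ 2 := by nlinarith [norm_nonneg Q, sq_nonneg ‖y - x‖]

theorem convexOn_quadratic (hQ : (Q : E →ₗ[ℝ] E).IsSymmetric) (hpos : ∀ x, 0 ≤ ⟪x, Q x⟫) :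
    ConvexOn ℝ univ (quadratic Q q) :=
  convexOn_univ_of_bregman_nonneg fun x y => by
    rw [bregman_quadratic hQ]; linarith [hpos (y - x)]

theorem isProxPoint_quadratic [FiniteDimensional ℝ E] (hQ : (Q : E →ₗ[ℝ] E).IsSymmetric)
    (hpos : ∀ x, 0 ≤ ⟪x, Q x⟫) (hμ : 0 < μ) (v : E) :
    IsProxPoint (quadratic Q q) μ v (resolventOp Q μ (v - μ • q)) := by
  set p := resolventOp Q μ (v - μ • q)
  have hvp : v - p = μ • (Q p + q) := by
    have h := resolventOp_add_smul hpos hμ.le (v - μ • q)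
    rw [eq_sub_iff_add_eq] at h
    rw [← h]; module
  refine isProxPoint_of_inner_le hμ fun z => ?_
  have h := bregman_quadratic (q := q) hQ p z
  rw [hvp, real_inner_smul_left]
  refine mul_le_mul_of_nonneg_left ?_ hμ.le
  simp only [bregman] at h
  linarith [hpos (z - p)]

end Quadratic

def fbEnvelope [CompleteSpace E] (f g : E → ℝ) (μ : ℝ) (x : E) : ℝ :=
  f x + moreauEnv g μ (x - μ • gradient f x) - μ / 2 * ‖gradient f x‖ ^ 2

def fbGradient (Q : E →L[ℝ] E) (q : E) (prox : E → E) (μ : ℝ) (x : E) : E :=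
  let r := x - prox (x - μ • (Q x + q))
  μ⁻¹ • (r - μ • Q r)

def drResidual (Q : E →L[ℝ] E) (q : E) (prox : E → E) (μ : ℝ) (z : E) : E :=
  resolventOp Q μ (z - μ • q) - prox ((2 : ℝ) • resolventOp Q μ (z - μ • q) - z)

def drGradient (Q : E →L[ℝ] E) (q : E) (prox : E → E) (μ : ℝ) (z : E) : E :=
  resolventOp Q μ (fbGradient Q q prox μ (resolventOp Q μ (z - μ • q)))

section Envelopes

variable {Q : E →L[ℝ] E} {q : E} {g : E → ℝ} {prox : E → E} {m L μ : ℝ}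

theorem bregman_fbEnvelope_quadratic [CompleteSpace E] (hQ : (Q : E →ₗ[ℝ] E).IsSymmetric)
    (hμ : μ ≠ 0) (x y : E) :
    bregman (fbEnvelope (quadratic Q q) g μ) (fbGradient Q q prox μ) x y
      = 1 / 2 * (⟪y - x, Q (y - x)⟫ - μ * ‖Q (y - x)‖ ^ 2)
        + bregman (moreauEnv g μ) (fun v => μ⁻¹ • (v - prox v))
            (x - μ • (Q x + q)) (y - μ • (Q y + q)) := by
  set T : E →ₗ[ℝ] E := 1 - μ • (Q : E →ₗ[ℝ] E)
  have hT : T.IsSymmetric := LinearMap.IsSymmetric.one.sub (hQ.smul (conj_trivial μ))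
  have hu : ∀ x, x - μ • (Q x + q) = T x - μ • q := fun x => by
    simp only [T, LinearMap.sub_apply, LinearMap.smul_apply, Module.End.one_apply,
      ContinuousLinearMap.coe_coe]
    module
  have hF : fbEnvelope (quadratic Q q) g μ
      = fun x => (quadratic Q q x - μ / 2 * ‖Q x + q‖ ^ 2) + moreauEnv g μ (T x - μ • q) :=
    funext fun x => by
      simp only [fbEnvelope, (hasGradientAt_quadratic hQ x).gradient, hu]
      ring
  have hG : fbGradient Q q prox μ x = ((Q x + q) - μ • Q (Q x + q))
      + T (μ⁻¹ • ((T x - μ • q) - prox (T x - μ • q))) := by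
    simp only [fbGradient, hu]
    generalize prox (T x - μ • q) = p
    simp only [T, LinearMap.sub_apply, LinearMap.smul_apply, Module.End.one_apply,
      ContinuousLinearMap.coe_coe, map_sub, map_smul, map_add]
    match_scalars <;> field_simp <;> ring
  have hM := bregman_comp_affine hT (μ • q) (moreauEnv g μ) (fun v => μ⁻¹ • (v - prox v)) x y
  rw [← hu, ← hu] at hM
  rw [← bregman_quadratic_sub_norm_sq (q := q) hQ, ← hM, ← bregman_add]
  simp only [bregman, hF, hG]

theorem bregman_drEnvelope_quadratic [FiniteDimensional ℝ E] (hQ : (Q : E →ₗ[ℝ] E).IsSymmetric)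
    (hpos : ∀ x, 0 ≤ ⟪x, Q x⟫) (hμ : 0 ≤ μ) (z y : E) :
    bregman (fun z => fbEnvelope (quadratic Q q) g μ (resolventOp Q μ (z - μ • q)))
        (drGradient Q q prox μ) z y
      = bregman (fbEnvelope (quadratic Q q) g μ) (fbGradient Q q prox μ)
          (resolventOp Q μ (z - μ • q)) (resolventOp Q μ (y - μ • q)) := by
  have h := bregman_comp_affine (isSymmetric_resolventOp hQ hpos hμ) (μ • resolventOp Q μ q)
    (fbEnvelope (quadratic Q q) g μ) (fbGradient Q q prox μ) z y
  unfold drGradient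
  simp only [map_sub, map_smul] at h ⊢
  exact h


theorem bregman_fbEnvelope_quadratic_mem_Icc [CompleteSpace E]
    (hQ : (Q : E →ₗ[ℝ] E).IsSymmetric)
    (hpos : ∀ x, 0 ≤ ⟪x, Q x⟫) (hL : ∀ x, ⟪x, Q x⟫ ≤ L * ‖x‖ ^ 2) (hμ : 0 < μ) (hμL : μ * L ≤ 1)
    (hg : ConvexOn ℝ univ g) (hp : ∀ v, IsProxPoint g μ v (prox v)) (x y : E) :
    bregman (fbEnvelope (quadratic Q q) g μ) (fbGradient Q q prox μ) x y
      ∈ Icc 0 ((L / 2 + 1 / (2 * μ)) * ‖y - x‖ ^ 2) := by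
  rw [bregman_fbEnvelope_quadratic hQ hμ.ne']
  have hM₀ := bregman_moreauEnv_nonneg hg hμ hp (x - μ • (Q x + q)) (y - μ • (Q y + q))
  have hM₁ := bregman_moreauEnv_le hμ hp (x - μ • (Q x + q)) (y - μ • (Q y + q))
  have hu : y - μ • (Q y + q) - (x - μ • (Q x + q)) = (y - x) - μ • Q (y - x) := by
    rw [map_sub]; module
  set d := y - x
  have hco : ‖Q d‖ ^ 2 ≤ L * ⟪d, Q d⟫ := by
    simpa using hQ.norm_map_sq_le_of_bounds (m := 0) (by simpa using hpos) hL d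
  have hT : ‖d - μ • Q d‖ ^ 2 ≤ ‖d‖ ^ 2 :=
    pow_le_pow_left₀ (norm_nonneg _)
      (hQ.norm_sub_smul_map_le_norm hpos hL hμ.le (by linarith) d) 2
  rw [hu] at hM₁
  have hM₂ : ‖d - μ • Q d‖ ^ 2 / (2 * μ) ≤ ‖d‖ ^ 2 / (2 * μ) := by gcongr
  have hquad₀ : μ * ‖Q d‖ ^ 2 ≤ ⟪d, Q d⟫ := by
    nlinarith [mul_le_mul_of_nonneg_left hco hμ.le, mul_le_mul_of_nonneg_right hμL (hpos d)]
  have hquad₁ : 0 ≤ μ * ‖Q d‖ ^ 2 := by positivity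
  constructor
  · linarith
  · have e : (L / 2 + 1 / (2 * μ)) * ‖d‖ ^ 2 = L * ‖d‖ ^ 2 / 2 + ‖d‖ ^ 2 / (2 * μ) := by ring
    linarith [hL d]

theorem bregman_drEnvelope_quadratic_mem_Icc [FiniteDimensional ℝ E]
    (hQ : (Q : E →ₗ[ℝ] E).IsSymmetric)
    (hpos : ∀ x, 0 ≤ ⟪x, Q x⟫) (hL : ∀ x, ⟪x, Q x⟫ ≤ L * ‖x‖ ^ 2) (hμ : 0 < μ) (hμL : μ * L ≤ 1)
    (hg : ConvexOn ℝ univ g) (hp : ∀ v, IsProxPoint g μ v (prox v)) (z y : E) :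
    bregman (fun z => fbEnvelope (quadratic Q q) g μ (resolventOp Q μ (z - μ • q)))
        (drGradient Q q prox μ) z y ∈ Icc 0 ((L / 2 + 1 / (2 * μ)) * ‖y - z‖ ^ 2) := by
  rw [bregman_drEnvelope_quadratic hQ hpos hμ.le]
  obtain ⟨h₀, h₁⟩ := bregman_fbEnvelope_quadratic_mem_Icc (q := q) hQ hpos hL hμ hμL hg hp
    (resolventOp Q μ (z - μ • q)) (resolventOp Q μ (y - μ • q))
  refine ⟨h₀, h₁.trans ?_⟩
  have hP : ‖resolventOp Q μ (y - μ • q) - resolventOp Q μ (z - μ • q)‖ ≤ ‖y - z‖ := by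
    rw [← map_sub, sub_sub_sub_cancel_right]
    exact norm_resolventOp_le hpos hμ.le _
  rcases eq_or_ne y z with rfl | hyz
  · simp
  have hL₀ : 0 ≤ L := by
    have h := (hpos (y - z)).trans (hL (y - z))
    exact nonneg_of_mul_nonneg_left h (pow_pos (norm_pos_iff.2 (sub_ne_zero.2 hyz)) 2)
  gcongr

theorem drGradient_eq [FiniteDimensional ℝ E] (hpos : ∀ x, 0 ≤ ⟪x, Q x⟫) (hμ : 0 ≤ μ) (z : E) :
    drGradient Q q prox μ z = μ⁻¹ • ((2 : ℝ) • resolventOp Q μ (drResidual Q q prox μ z)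
      - drResidual Q q prox μ z) := by
  have hu : resolventOp Q μ (z - μ • q) - μ • (Q (resolventOp Q μ (z - μ • q)) + q)
      = (2 : ℝ) • resolventOp Q μ (z - μ • q) - z := by
    linear_combination (norm := module) -resolventOp_add_smul hpos hμ (z - μ • q)
  simp only [drGradient, fbGradient, drResidual]
  rw [hu, map_smul, resolventOp_sub_smul hpos hμ]

theorem norm_drResidual_sub_le [FiniteDimensional ℝ E] (hQ : (Q : E →ₗ[ℝ] E).IsSymmetric)
    (hm₀ : 0 ≤ m) (hm : ∀ x, m * ‖x‖ ^ 2 ≤ ⟪x, Q x⟫) (hL : ∀ x, ⟪x, Q x⟫ ≤ L * ‖x‖ ^ 2)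
    (hμ : 0 < μ) (hμm : μ * m ≤ 1) (hμL : μ * L ≤ 1) (hg : ConvexOn ℝ univ g)
    (hp : ∀ v, IsProxPoint g μ v (prox v)) (z z' : E) :
    (1 + μ * m) * ‖drResidual Q q prox μ z - drResidual Q q prox μ z'‖ ≤ ‖z - z'‖ := by
  set u : E → E := fun z => (2 : ℝ) • resolventOp Q μ (z - μ • q) - z
  have hΔ : (2 : ℝ) • (drResidual Q q prox μ z - drResidual Q q prox μ z')
      = (z - z') - ((2 : ℝ) • (prox (u z) - prox (u z')) - (u z - u z')) := by
    simp only [drResidual, u]; module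
  have hu : u z - u z' = (2 : ℝ) • resolventOp Q μ (z - z') - (z - z') := by
    simp only [u]
    rw [show z - z' = (z - μ • q) - (z' - μ • q) by abel, map_sub (resolventOp Q μ) (z - μ • q)]
    module
  have hprox := (hp (u z)).norm_two_smul_sub_le hg hμ (hp (u z'))
  have hrefl := norm_two_smul_resolventOp_sub_le hQ hm₀ hm hL hμ.le hμm hμL (z - z')
  rw [← hu] at hrefl
  have h2 : 2 * ‖drResidual Q q prox μ z - drResidual Q q prox μ z'‖ ≤ ‖z - z'‖ + ‖u z - u z'‖ := by
    rw [← abs_two, ← Real.norm_eq_abs, ← norm_smul, hΔ]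
    exact (norm_sub_le _ _).trans (by gcongr)
  nlinarith [mul_le_mul_of_nonneg_left h2 (by positivity : (0 : ℝ) ≤ 1 + μ * m)]

theorem norm_drGradient_sub_le [FiniteDimensional ℝ E] (hQ : (Q : E →ₗ[ℝ] E).IsSymmetric)
    (hm₀ : 0 ≤ m) (hm : ∀ x, m * ‖x‖ ^ 2 ≤ ⟪x, Q x⟫) (hL : ∀ x, ⟪x, Q x⟫ ≤ L * ‖x‖ ^ 2)
    (hμ : 0 < μ) (hμm : μ * m ≤ 1) (hμL : μ * L ≤ 1) (hg : ConvexOn ℝ univ g)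
    (hp : ∀ v, IsProxPoint g μ v (prox v)) (z z' : E) :
    ‖drGradient Q q prox μ z - drGradient Q q prox μ z'‖
      ≤ (1 - μ * m) / (μ * (1 + μ * m) ^ 2) * ‖z - z'‖ := by
  have hpos : ∀ x, 0 ≤ ⟪x, Q x⟫ := fun x => le_trans (by positivity) (hm x)
  set Δ := drResidual Q q prox μ z - drResidual Q q prox μ z'
  have hΔ := norm_drResidual_sub_le (q := q) hQ hm₀ hm hL hμ hμm hμL hg hp z z'
  have hrefl := norm_two_smul_resolventOp_sub_le hQ hm₀ hm hL hμ.le hμm hμL Δ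
  have hsq : (1 + μ * m) ^ 2 * ‖(2 : ℝ) • resolventOp Q μ Δ - Δ‖ ≤ (1 - μ * m) * ‖z - z'‖ := by
    nlinarith [mul_le_mul_of_nonneg_left hΔ (by linarith : 0 ≤ 1 - μ * m),
      mul_le_mul_of_nonneg_left hrefl (by positivity : 0 ≤ 1 + μ * m)]
  have e : drGradient Q q prox μ z - drGradient Q q prox μ z'
      = μ⁻¹ • ((2 : ℝ) • resolventOp Q μ Δ - Δ) := by
    rw [drGradient_eq hpos hμ.le, drGradient_eq hpos hμ.le, map_sub]; module
  rw [e, norm_smul, Real.norm_of_nonneg (inv_nonneg.2 hμ.le)]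
  calc μ⁻¹ * ‖(2 : ℝ) • resolventOp Q μ Δ - Δ‖
      = (1 + μ * m) ^ 2 * ‖(2 : ℝ) • resolventOp Q μ Δ - Δ‖ / (μ * (1 + μ * m) ^ 2) := by
        field_simp
    _ ≤ (1 - μ * m) * ‖z - z'‖ / (μ * (1 + μ * m) ^ 2) := by gcongr
    _ = (1 - μ * m) / (μ * (1 + μ * m) ^ 2) * ‖z - z'‖ := by ring

end Envelopes

theorem DR_envelope_smooth_quadratic_general {n : ℕ}
    (Q : EuclideanSpace ℝ (Fin n) →L[ℝ] EuclideanSpace ℝ (Fin n))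
    (q : EuclideanSpace ℝ (Fin n)) (g : EuclideanSpace ℝ (Fin n) → ℝ)
    (m L μ Lt : ℝ)
    (hQsym : ∀ x y : EuclideanSpace ℝ (Fin n), ⟪Q x, y⟫ = ⟪x, Q y⟫)
    (hm : 0 ≤ m) (hL : 0 < L)
    (hQm : ∀ x : EuclideanSpace ℝ (Fin n), m * ‖x‖ ^ 2 ≤ ⟪x, Q x⟫)
    (hQmmin : ∃ x : EuclideanSpace ℝ (Fin n), x ≠ 0 ∧ ⟪x, Q x⟫ = m * ‖x‖ ^ 2)
    (hQL : ∀ x : EuclideanSpace ℝ (Fin n), ⟪x, Q x⟫ ≤ L * ‖x‖ ^ 2)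
    (f : EuclideanSpace ℝ (Fin n) → ℝ)
    (hf : ∀ x, f x = (1 / 2) * ⟪x, Q x⟫ + ⟪q, x⟫)
    (hgconv : ConvexOn ℝ univ g)
    (hμ : μ ∈ Ioo 0 (1 / L))
    (hLt : Lt = (1 - μ * m) / (μ * (1 + μ * m) ^ 2))
    (M : EuclideanSpace ℝ (Fin n) → ℝ)
    (hM : ∀ v, M v = ⨅ z : EuclideanSpace ℝ (Fin n), (g z + ‖z - v‖ ^ 2 / (2 * μ)))
    (Fμ : EuclideanSpace ℝ (Fin n) → ℝ)
    (hFμ : ∀ x, Fμ x = f x + M (x - μ • gradient f x) - μ / 2 * ‖gradient f x‖ ^ 2)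
    (proxf : EuclideanSpace ℝ (Fin n) → EuclideanSpace ℝ (Fin n))
    (hproxf : ∀ v, IsMinOn (fun z => f z + ‖z - v‖ ^ 2 / (2 * μ)) univ (proxf v))
    (Dμ : EuclideanSpace ℝ (Fin n) → ℝ)
    (hDμ : ∀ z, Dμ z = Fμ (proxf z)) :
    ConvexOn ℝ univ Dμ ∧ Differentiable ℝ Dμ ∧
      ∀ x y, ‖gradient Dμ x - gradient Dμ y‖ ≤ Lt * ‖x - y‖ := by
  obtain ⟨hμ₀, hμL⟩ := hμ
  have hμL' : μ * L ≤ 1 := ((lt_div_iff₀ hL).1 hμL).le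
  have hmL : m ≤ L := by
    obtain ⟨x, hx, hxm⟩ := hQmmin
    exact le_of_mul_le_mul_right (hxm ▸ hQL x) (pow_pos (norm_pos_iff.2 hx) 2)
  have hμm : μ * m ≤ 1 := (mul_le_mul_of_nonneg_left hmL hμ₀.le).trans hμL'
  have hpos : ∀ x, 0 ≤ ⟪x, Q x⟫ := fun x => le_trans (by positivity) (hQm x)
  have hQ : (Q : EuclideanSpace ℝ (Fin n) →ₗ[ℝ] _).IsSymmetric := hQsym
  obtain rfl : f = quadratic Q q := funext hf
  obtain rfl : M = moreauEnv g μ := funext hM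
  obtain rfl : Fμ = fbEnvelope (quadratic Q q) g μ := funext hFμ
  have hprox : ∀ z, proxf z = resolventOp Q μ (z - μ • q) := fun z =>
    IsProxPoint.eq (convexOn_quadratic hQ hpos) hμ₀ (hproxf z) (isProxPoint_quadratic hQ hpos hμ₀ z)
  obtain rfl : Dμ = fun z => fbEnvelope (quadratic Q q) g μ (resolventOp Q μ (z - μ • q)) :=
    funext fun z => by rw [hDμ, hprox]
  choose prox hprox_g using exists_isProxPoint hgconv hμ₀
  have hbreg := bregman_drEnvelope_quadratic_mem_Icc (q := q) hQ hpos hQL hμ₀ hμL' hgconv hprox_g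
  have hgrad : ∀ z, HasGradientAt _ (drGradient Q q prox μ z) z := fun z =>
    hasGradientAt_of_abs_bregman_le fun y => (abs_of_nonneg (hbreg z y).1).symm ▸ (hbreg z y).2
  refine ⟨convexOn_univ_of_bregman_nonneg fun z y => (hbreg z y).1,
    fun z => (hgrad z).differentiableAt, fun x y => ?_⟩
  rw [(hgrad x).gradient, (hgrad y).gradient, hLt]
  exact norm_drGradient_sub_le hQ hm hQm hQL hμ₀ hμm hμL' hgconv hprox_g x y

/-- Lemma 2, Douglas–Rachford smoothness: for a convex
quadratic `f`, the Douglas–Rachford envelope is convex and differentiable with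
`L̃ = (1 - μm)/(μ(1 + μm)²)`-Lipschitz gradient. -/
theorem DR_envelope_smooth_quadratic {n : ℕ}
    (Q : EuclideanSpace ℝ (Fin n) →L[ℝ] EuclideanSpace ℝ (Fin n))
    (q : EuclideanSpace ℝ (Fin n)) (g : EuclideanSpace ℝ (Fin n) → ℝ)
    (m L μ Lt : ℝ)
    (hQsym : ∀ x y : EuclideanSpace ℝ (Fin n), ⟪Q x, y⟫ = ⟪x, Q y⟫)
    (hm : 0 ≤ m) (hL : 0 < L)
    (hQm : ∀ x : EuclideanSpace ℝ (Fin n), m * ‖x‖ ^ 2 ≤ ⟪x, Q x⟫)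
    (hQmmin : ∃ x : EuclideanSpace ℝ (Fin n), x ≠ 0 ∧ ⟪x, Q x⟫ = m * ‖x‖ ^ 2)
    (hQL : ∀ x : EuclideanSpace ℝ (Fin n), ⟪x, Q x⟫ ≤ L * ‖x‖ ^ 2)
    (hQLmax : ∃ x : EuclideanSpace ℝ (Fin n), x ≠ 0 ∧ ⟪x, Q x⟫ = L * ‖x‖ ^ 2)
    (f : EuclideanSpace ℝ (Fin n) → ℝ)
    (hf : ∀ x, f x = (1 / 2) * ⟪x, Q x⟫ + ⟪q, x⟫)
    (hgconv : ConvexOn ℝ univ g) (hglsc : LowerSemicontinuous g)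
    (hμ : μ ∈ Ioo 0 (1 / L))
    (hLt : Lt = (1 - μ * m) / (μ * (1 + μ * m) ^ 2))
    (M : EuclideanSpace ℝ (Fin n) → ℝ)
    (hM : ∀ v, M v = ⨅ z : EuclideanSpace ℝ (Fin n), (g z + ‖z - v‖ ^ 2 / (2 * μ)))
    (Fμ : EuclideanSpace ℝ (Fin n) → ℝ)
    (hFμ : ∀ x, Fμ x = f x + M (x - μ • gradient f x) - μ / 2 * ‖gradient f x‖ ^ 2)
    (proxf : EuclideanSpace ℝ (Fin n) → EuclideanSpace ℝ (Fin n))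
    (hproxf : ∀ v, IsMinOn (fun z => f z + ‖z - v‖ ^ 2 / (2 * μ)) univ (proxf v))
    (Dμ : EuclideanSpace ℝ (Fin n) → ℝ)
    (hDμ : ∀ z, Dμ z = Fμ (proxf z)) :
    ConvexOn ℝ univ Dμ ∧ Differentiable ℝ Dμ ∧
      ∀ x y, ‖gradient Dμ x - gradient Dμ y‖ ≤ Lt * ‖x - y‖ :=
  DR_envelope_smooth_quadratic_general Q q g m L μ Lt hQsym hm hL hQm hQmmin hQL f hf hgconv hμ hLt
    M hM Fμ hFμ proxf hproxf Dμ hDμ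
end
end

section
/- Let f : ℝⁿ → ℝ be continuously differentiable and convex with L-Lipschitz gradient, let g : ℝⁿ → ℝ be convex and lower semicontinuous, and let μ ∈ (0, 1/L). Then for every x ∈ ℝⁿ: F(p_μ(x)) ≤ F_μ(x) ≤ F(x), where F = f + g and p_μ(x) = prox_{μg}(x − μ∇f(x)). -/
/-!
The upper bound is the infimum defining `M_{μg}(x - μ∇f(x))` evaluated at the competitor `z = x`.
For the lower bound, write `p = p_μ(x)`: expanding the square, the minimum value
`M_{μg}(x - μ∇f(x)) - μ/2 ‖∇f(x)‖²` equals `g p + ⟪∇f(x), p - x⟫ + ‖p - x‖² / (2μ)`, and the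
descent lemma for the `L`-smooth `f` together with `L ≤ 1/μ` bounds `f p` by
`f x + ⟪∇f(x), p - x⟫ + ‖p - x‖² / (2μ)`.
-/

open Set RealInnerProductSpace

variable {E : Type*} [NormedAddCommGroup E] [InnerProductSpace ℝ E]

lemma sq_norm_sub_sub_smul_div (x z w : E) {μ : ℝ} (hμ : μ ≠ 0) :
    ‖z - (x - μ • w)‖ ^ 2 / (2 * μ) - μ / 2 * ‖w‖ ^ 2 = ⟪w, z - x⟫ + ‖z - x‖ ^ 2 / (2 * μ) := by
  rw [show z - (x - μ • w) = (z - x) + μ • w by abel, norm_add_sq_real, inner_smul_right,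
    norm_smul, Real.norm_eq_abs, mul_pow, sq_abs, real_inner_comm]
  field_simp
  ring

variable [CompleteSpace E]

lemma hasDerivAt_comp_add_smul {f : E → ℝ} (hf : Differentiable ℝ f) (x d : E) (t : ℝ) :
    HasDerivAt (fun t : ℝ => f (x + t • d)) ⟪gradient f (x + t • d), d⟫ t := by
  have hline : HasDerivAt (fun t : ℝ => x + t • d) d t := by
    simpa using ((hasDerivAt_id t).smul_const d).const_add x
  have hgrad := hasGradientAt_iff_hasFDerivAt.mp (hf (x + t • d)).hasGradientAt
  simpa [Function.comp_def] using hgrad.comp_hasDerivAt t hline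

theorem descent_lemma {f : E → ℝ} {L : ℝ} (hf : Differentiable ℝ f)
    (hLip : ∀ x y, ‖gradient f x - gradient f y‖ ≤ L * ‖x - y‖) (x y : E) :
    f y ≤ f x + ⟪gradient f x, y - x⟫ + L / 2 * ‖y - x‖ ^ 2 := by
  set d := y - x
  -- `φ` has derivative `⟪∇f (x + t d) - ∇f x, d⟫ - t L ‖d‖² ≤ 0`, so `φ 1 ≤ φ 0`.
  set φ : ℝ → ℝ := fun t => f (x + t • d) - t * ⟪gradient f x, d⟫ - t ^ 2 * (L / 2 * ‖d‖ ^ 2)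
  have hφ : ∀ t, HasDerivAt φ (⟪gradient f (x + t • d) - gradient f x, d⟫ - t * (L * ‖d‖ ^ 2)) t := by
    intro t
    have hquad := (hasDerivAt_pow 2 t).mul_const (L / 2 * ‖d‖ ^ 2)
    refine (((hasDerivAt_comp_add_smul hf x d t).sub
      ((hasDerivAt_id t).mul_const ⟪gradient f x, d⟫)).sub hquad).congr_deriv ?_
    rw [inner_sub_left]
    ring
  have hanti : AntitoneOn φ (Icc 0 1) := by
    refine antitoneOn_of_deriv_nonpos (convex_Icc 0 1)
      (fun t _ => (hφ t).continuousAt.continuousWithinAt)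
      (fun t _ => (hφ t).differentiableAt.differentiableWithinAt) fun t ht => ?_
    rw [interior_Icc] at ht
    have hlip : ‖gradient f (x + t • d) - gradient f x‖ ≤ L * (t * ‖d‖) := by
      simpa [norm_smul, abs_of_pos ht.1] using hLip (x + t • d) x
    have hcs := real_inner_le_norm (gradient f (x + t • d) - gradient f x) d
    rw [(hφ t).deriv]
    nlinarith [mul_le_mul_of_nonneg_right hlip (norm_nonneg d)]
  have h10 : φ 1 ≤ φ 0 := hanti (by norm_num) (by norm_num) zero_le_one
  simp only [φ, d, one_smul, add_sub_cancel, zero_smul, add_zero] at h10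
  linarith

lemma le_add_sq_norm_sub_forward_step {f : E → ℝ} {L μ : ℝ} (hf : Differentiable ℝ f)
    (hLip : ∀ x y, ‖gradient f x - gradient f y‖ ≤ L * ‖x - y‖) (hμ : 0 < μ) (hLμ : L * μ ≤ 1)
    (x z : E) :
    f z ≤ f x + ‖z - (x - μ • gradient f x)‖ ^ 2 / (2 * μ) - μ / 2 * ‖gradient f x‖ ^ 2 := by
  have hquad : L / 2 * ‖z - x‖ ^ 2 ≤ ‖z - x‖ ^ 2 / (2 * μ) := by
    rw [div_mul_eq_mul_div, div_le_div_iff₀ two_pos (by positivity)]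
    nlinarith [sq_nonneg ‖z - x‖]
  have := sq_norm_sub_sub_smul_div x z (gradient f x) hμ.ne'
  linarith [descent_lemma hf hLip x z]

theorem FB_envelope_sandwich_general {n : ℕ}
    (f g F : EuclideanSpace ℝ (Fin n) → ℝ)
    (L μ : ℝ)
    (hfC1 : ContDiff ℝ 1 f)
    (hfLip : ∀ x y, ‖gradient f x - gradient f y‖ ≤ L * ‖x - y‖)
    (hF : ∀ x, F x = f x + g x)
    (hμ : μ ∈ Ioo 0 (1 / L))
    (proxg : EuclideanSpace ℝ (Fin n) → EuclideanSpace ℝ (Fin n))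
    (hproxg : ∀ v, IsMinOn (fun z => g z + ‖z - v‖ ^ 2 / (2 * μ)) univ (proxg v))
    (p : EuclideanSpace ℝ (Fin n) → EuclideanSpace ℝ (Fin n))
    (hp : ∀ x, p x = proxg (x - μ • gradient f x))
    (M : EuclideanSpace ℝ (Fin n) → ℝ)
    (hM : ∀ v, M v = ⨅ z : EuclideanSpace ℝ (Fin n), (g z + ‖z - v‖ ^ 2 / (2 * μ)))
    (Fμ : EuclideanSpace ℝ (Fin n) → ℝ)
    (hFμ : ∀ x, Fμ x = f x + M (x - μ • gradient f x) - μ / 2 * ‖gradient f x‖ ^ 2) :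
    ∀ x : EuclideanSpace ℝ (Fin n), F (p x) ≤ Fμ x ∧ Fμ x ≤ F x := by
  intro x
  obtain ⟨hμ0, hμL⟩ := hμ
  have hLμ : L * μ ≤ 1 := by
    have hL : 0 < L := one_div_pos.mp (hμ0.trans hμL)
    nlinarith [(lt_div_iff₀ hL).mp hμL]
  set v := x - μ • gradient f x
  have hmin := isMinOn_univ_iff.mp (hproxg v)
  have hMv : M v = g (proxg v) + ‖proxg v - v‖ ^ 2 / (2 * μ) := by
    rw [hM]
    exact ciInf_eq_of_forall_ge_of_forall_gt_exists_lt hmin fun _ hw => ⟨proxg v, hw⟩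
  rw [hFμ, hF, hF, hp, hMv]
  constructor
  · linarith [le_add_sq_norm_sub_forward_step hfC1.differentiable_one hfLip hμ0 hLμ x (proxg v)]
  · have hstep : ‖x - v‖ ^ 2 / (2 * μ) = μ / 2 * ‖gradient f x‖ ^ 2 := by
      simpa [v, sub_eq_zero] using sq_norm_sub_sub_smul_div x x (gradient f x) hμ0.ne'
    linarith [hmin x]

/-- the forward–backward envelope is sandwiched between the
objective evaluated at the proximal gradient point and the objective itself:
`F(p_μ(x)) ≤ F_μ(x) ≤ F(x)`. -/
theorem FB_envelope_sandwich {n : ℕ}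
    (f g F : EuclideanSpace ℝ (Fin n) → ℝ)
    (L μ : ℝ) (hL : 0 < L)
    (hfC1 : ContDiff ℝ 1 f)
    (hfconv : ConvexOn ℝ univ f)
    (hfLip : ∀ x y, ‖gradient f x - gradient f y‖ ≤ L * ‖x - y‖)
    (hgconv : ConvexOn ℝ univ g) (hglsc : LowerSemicontinuous g)
    (hF : ∀ x, F x = f x + g x)
    (hμ : μ ∈ Ioo 0 (1 / L))
    (proxg : EuclideanSpace ℝ (Fin n) → EuclideanSpace ℝ (Fin n))
    (hproxg : ∀ v, IsMinOn (fun z => g z + ‖z - v‖ ^ 2 / (2 * μ)) univ (proxg v))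
    (p : EuclideanSpace ℝ (Fin n) → EuclideanSpace ℝ (Fin n))
    (hp : ∀ x, p x = proxg (x - μ • gradient f x))
    (M : EuclideanSpace ℝ (Fin n) → ℝ)
    (hM : ∀ v, M v = ⨅ z : EuclideanSpace ℝ (Fin n), (g z + ‖z - v‖ ^ 2 / (2 * μ)))
    (Fμ : EuclideanSpace ℝ (Fin n) → ℝ)
    (hFμ : ∀ x, Fμ x = f x + M (x - μ • gradient f x) - μ / 2 * ‖gradient f x‖ ^ 2) :
    ∀ x : EuclideanSpace ℝ (Fin n), F (p x) ≤ Fμ x ∧ Fμ x ≤ F x :=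
  FB_envelope_sandwich_general f g F L μ hfC1 hfLip hF hμ proxg hproxg p hp M hM Fμ hFμ
end
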